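/- Under the stated context, α and β are algebraic integers, (α + β)² and α·β are nonzero coprime rational integers, and α/β is not a unit, i.e., there is no u ∈ ℂ with both u and u⁻¹ algebraic integers such that α = u·β. -/

import Mathlib

open Polynomial IntermediateField

noncomputable def sqrtneg (c : ℕ) : ℂ := Complex.I * Real.sqrt c

lemma sqrtneg_sq (c : ℕ) : sqrtneg c ^ 2 = -(c : ℂ) := by
  have h : ((Real.sqrt c : ℝ) : ℂ) ^ 2 = (c : ℂ) := by
    rw [← Complex.ofReal_pow, Real.sq_sqrt (by positivity)]
    norm_num
  simp [sqrtneg, mul_pow, Complex.I_sq, h]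

lemma sqrtneg_isIntegral (c : ℕ) : IsIntegral ℚ (sqrtneg c) := by
  refine ⟨X ^ 2 + C (c : ℚ), monic_X_pow_add_C _ two_ne_zero, ?_⟩
  simp [eval₂_add, eval₂_pow, sqrtneg_sq c]

/-- The field `K = ℚ(√-c)`, realised as the subfield of `ℂ` generated by `i·√c`. -/
noncomputable def Kf (c : ℕ) : IntermediateField ℚ ℂ := ℚ⟮sqrtneg c⟯

/-- The class number of `ℚ(√-c)`. -/
noncomputable def classNumberK (c : ℕ) : ℕ :=
  haveI : FiniteDimensional ℚ (Kf c) :=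
    IntermediateField.adjoin.finiteDimensional (sqrtneg_isIntegral c)
  haveI : NumberField (Kf c) := ⟨⟩
  NumberField.classNumber (Kf c)

/-! `δ` and `δ̄` are the roots of `X² - T X + N` with `T ∈ ℤ` (as `δ ∈ K` is integral) and
`N = C₁ y` (take norms in `δᵖ = C₁ᵉ (C₁ x + d √-c)`, `p = 2e + 1`), so `δᵖ + δ̄ᵖ = 2 C₁ᵉ⁺¹ x`
is the Lucas value `V_p(T, N)`. Since `V_p ≡ Tᵖ mod N` and `C₁` is squarefree, `T = C₁ s`;
then `α, β` are the roots of `X² - s √C₁ X + y`, so `(α + β)² = C₁ s²` and `α β = y`.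
A prime `q` dividing both `C₁ s²` and `y` is prime to `C₁ x`, so it divides `T` and `N`,
whence `q² ∣ V_p`, i.e. `q² ∣ 2`. Finally `α = u β` with `u` a unit makes
`u + u⁻¹ = (C₁ s² - 2 y) / y` a rational integer, so `y ∣ C₁ s²`, which forces `y = 1`. -/

open ComplexConjugate

def lucasV (T N : ℤ) : ℕ → ℤ
  | 0 => 2
  | 1 => T
  | k + 2 => T * lucasV T N (k + 1) - N * lucasV T N k

namespace lucasV

variable {T N : ℤ}

theorem cast_eq_add_pow {R : Type*} [CommRing R] {a b : R} (hsum : a + b = T)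
    (hprod : a * b = N) : ∀ k, (lucasV T N k : R) = a ^ k + b ^ k
  | 0 => by norm_num [lucasV]
  | 1 => by simp [lucasV, hsum]
  | k + 2 => by
    rw [lucasV, Int.cast_sub, Int.cast_mul, Int.cast_mul, cast_eq_add_pow hsum hprod (k + 1),
      cast_eq_add_pow hsum hprod k, ← hsum, ← hprod]
    ring

theorem dvd_sub_pow : ∀ k, N ∣ lucasV T N (k + 1) - T ^ (k + 1)
  | 0 => by simp [lucasV]
  | k + 1 => by
    have h : lucasV T N (k + 2) - T ^ (k + 2) =
        T * (lucasV T N (k + 1) - T ^ (k + 1)) - N * lucasV T N k := by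
      rw [lucasV]; ring
    rw [h]
    exact dvd_sub ((dvd_sub_pow k).mul_left T) (dvd_mul_right N _)

theorem dvd_of_squarefree {a : ℤ} (ha : Squarefree a) (hN : a ∣ N) {p : ℕ} (hp : p ≠ 0)
    (hV : a ∣ lucasV T N p) : a ∣ T := by
  obtain ⟨k, rfl⟩ := Nat.exists_eq_succ_of_ne_zero hp
  refine (ha.dvd_pow_iff_dvd hp).mp ?_
  simpa using dvd_sub hV (hN.trans (dvd_sub_pow (T := T) k))

theorem dvd_of_odd : ∀ k, T ∣ lucasV T N (2 * k + 1)
  | 0 => by simp [lucasV]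
  | k + 1 => by
    rw [show 2 * (k + 1) + 1 = 2 * k + 1 + 2 by ring, lucasV]
    exact dvd_sub (dvd_mul_right T _) ((dvd_of_odd k).mul_left N)

theorem ne_zero_of_odd {k : ℕ} (h : lucasV T N (2 * k + 1) ≠ 0) : T ≠ 0 := by
  rintro rfl
  exact h (zero_dvd_iff.mp (dvd_of_odd k))

theorem pow_dvd {q : ℤ} (hT : q ∣ T) (hN : q ∣ N) : ∀ k, q ^ ((k + 1) / 2) ∣ lucasV T N k
  | 0 => by simp
  | 1 => by simpa [lucasV] using hT
  | k + 2 => by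
    rw [lucasV]
    refine dvd_sub ?_ ?_
    · calc q ^ ((k + 2 + 1) / 2) ∣ q ^ (1 + (k + 1 + 1) / 2) := pow_dvd_pow q (by omega)
        _ ∣ _ := by rw [pow_add, pow_one]; exact mul_dvd_mul hT (pow_dvd hT hN (k + 1))
    · calc q ^ ((k + 2 + 1) / 2) = q ^ (1 + (k + 1) / 2) := by congr 1; omega
        _ ∣ _ := by rw [pow_add, pow_one]; exact mul_dvd_mul hN (pow_dvd hT hN k)

end lucasV

theorem isCoprime_mul_sq_of_lucasV {a b s y : ℤ} {p : ℕ} (hp : 3 ≤ p) (hay : IsCoprime a y)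
    (hby : IsCoprime b y) (hV : lucasV (a * s) (a * y) p = 2 * b) :
    IsCoprime (a * s ^ 2) y := by
  rw [Int.isCoprime_iff_gcd_eq_one]
  by_contra hg
  obtain ⟨q, hq, hqg⟩ := Nat.exists_prime_and_dvd hg
  have hqZ : Prime (q : ℤ) := Nat.prime_iff_prime_int.mp hq
  have hqas : (q : ℤ) ∣ a * s ^ 2 :=
    (Int.natCast_dvd_natCast.mpr hqg).trans (Int.gcd_dvd_left _ _)
  have hqy : (q : ℤ) ∣ y := (Int.natCast_dvd_natCast.mpr hqg).trans (Int.gcd_dvd_right _ _)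
  have hqa : ¬ (q : ℤ) ∣ a := fun h => hqZ.not_isUnit (hay.isUnit_of_dvd' h hqy)
  have hqs : (q : ℤ) ∣ s := hqZ.dvd_of_dvd_pow ((hqZ.dvd_or_dvd hqas).resolve_left hqa)
  have hq2b : (q : ℤ) ^ 2 ∣ 2 * b := hV ▸ (pow_dvd_pow _ (by omega)).trans
    (lucasV.pow_dvd (dvd_mul_of_dvd_right hqs a) (dvd_mul_of_dvd_right hqy a) p)
  have hq2 : (q : ℤ) ^ 2 ∣ 2 :=
    (hby.of_isCoprime_of_dvd_right hqy).symm.pow_left.dvd_of_dvd_mul_right hq2b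
  have := Int.le_of_dvd two_pos hq2
  have : (2 : ℤ) ≤ q := by exact_mod_cast hq.two_le
  nlinarith

theorem Nat.coprime_of_add_eq_of_gcd_gcd_eq_one {a b n : ℕ} (h : a + b = n)
    (hg : Nat.gcd (Nat.gcd a b) n = 1) : Nat.Coprime a n := by
  have hb : Nat.gcd a n ∣ b :=
    (Nat.dvd_add_right (Nat.gcd_dvd_left a n)).mp (h ▸ Nat.gcd_dvd_right a n)
  exact Nat.dvd_one.mp
    (hg ▸ Nat.dvd_gcd (Nat.dvd_gcd (Nat.gcd_dvd_left a n) hb) (Nat.gcd_dvd_right a n))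

theorem isCoprime_mul_of_mul_sq_add_eq_pow {a b x y p : ℕ} (hp : p ≠ 0)
    (h : a * x ^ 2 + b = y ^ p) (hg : Nat.gcd (Nat.gcd (a * x ^ 2) b) (y ^ p) = 1) :
    IsCoprime ((a : ℤ) * x) y := by
  have := (Nat.coprime_of_add_eq_of_gcd_gcd_eq_one h hg).coprime_dvd_left
    (mul_dvd_mul_left a (dvd_pow_self x two_ne_zero))
  exact_mod_cast Nat.isCoprime_iff_coprime.mpr
    ((Nat.coprime_pow_right_iff (Nat.pos_of_ne_zero hp) _ _).mp this)

theorem exists_intCast_eq_of_isIntegral_ratCast {q : ℚ} (h : IsIntegral ℤ (q : ℂ)) :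
    ∃ n : ℤ, (n : ℂ) = q := by
  have : IsIntegral ℤ q := (isIntegral_algebraMap_iff (algebraMap ℚ ℂ).injective).mp h
  obtain ⟨n, hn⟩ := IsIntegrallyClosed.isIntegral_iff.mp this
  exact ⟨n, by rw [← hn]; simp⟩

theorem isIntegral_conj {z : ℂ} (h : IsIntegral ℤ z) : IsIntegral ℤ (conj z) :=
  h.map (starRingEnd ℂ).toIntAlgHom

theorem conj_sqrtneg (c : ℕ) : conj (sqrtneg c) = -sqrtneg c := by
  simp [sqrtneg]

theorem exists_rat_eq_of_mem_Kf {c : ℕ} {z : ℂ} (hz : z ∈ Kf c) :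
    ∃ r s : ℚ, z = r + s * sqrtneg c := by
  rw [Kf, ← IntermediateField.mem_toSubalgebra,
    adjoin_simple_toSubalgebra_of_isAlgebraic (sqrtneg_isIntegral c).isAlgebraic] at hz
  induction hz using Algebra.adjoin_induction with
  | mem z hz => exact ⟨0, 1, by simp_all⟩
  | algebraMap r => exact ⟨r, 0, by simp⟩
  | add z w _ _ hz hw =>
    obtain ⟨r, s, rfl⟩ := hz
    obtain ⟨r', s', rfl⟩ := hw
    exact ⟨r + r', s + s', by push_cast; ring⟩
  | mul z w _ _ hz hw =>
    obtain ⟨r, s, rfl⟩ := hz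
    obtain ⟨r', s', rfl⟩ := hw
    exact ⟨r * r' - c * s * s', r * s' + r' * s, by
      push_cast; linear_combination (s * s' : ℂ) * sqrtneg_sq c⟩

theorem exists_intCast_eq_add_conj_of_mem_Kf {c : ℕ} {z : ℂ} (hz : z ∈ Kf c)
    (hint : IsIntegral ℤ z) : ∃ T : ℤ, z + conj z = T := by
  obtain ⟨r, s, rfl⟩ := exists_rat_eq_of_mem_Kf hz
  have htr : r + s * sqrtneg c + conj (r + s * sqrtneg c) = ((2 * r : ℚ) : ℂ) := by
    simp only [map_add, map_mul, map_ratCast, conj_sqrtneg]; push_cast; ring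
  obtain ⟨T, hT⟩ :=
    exists_intCast_eq_of_isIntegral_ratCast (htr ▸ hint.add (isIntegral_conj hint))
  exact ⟨T, htr.trans hT.symm⟩

theorem mul_conj_eq_of_pow_eq {z : ℂ} {n a : ℕ} (hn : n ≠ 0)
    (h : (z * conj z) ^ n = (a : ℂ) ^ n) : z * conj z = a := by
  rw [Complex.mul_conj] at h ⊢
  have h' : Complex.normSq z ^ n = (a : ℝ) ^ n := by exact_mod_cast h
  exact_mod_cast (pow_left_inj₀ (Complex.normSq_nonneg z) (Nat.cast_nonneg a) hn).mp h'

theorem exists_lucasV_eq_of_pow_eq {C₁ C₂ c d x y e : ℕ} {δ : ℂ} (hδK : δ ∈ Kf c)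
    (hδint : IsIntegral ℤ δ) (hfact : C₁ * C₂ = c * d ^ 2)
    (heq : C₁ * x ^ 2 + C₂ = y ^ (2 * e + 1))
    (hδ : δ ^ (2 * e + 1) = C₁ ^ e * (C₁ * x + d * sqrtneg c)) :
    ∃ T : ℤ, δ + conj δ = T ∧ δ * conj δ = ((C₁ * y : ℤ) : ℂ) ∧
      lucasV T (C₁ * y) (2 * e + 1) = 2 * ((C₁ : ℤ) ^ (e + 1) * x) := by
  have hδ' : conj δ ^ (2 * e + 1) = C₁ ^ e * (C₁ * x - d * sqrtneg c) := by
    rw [← map_pow, hδ]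
    simp [conj_sqrtneg, sub_eq_add_neg]
  have hfact' : (C₁ * C₂ : ℂ) = c * d ^ 2 := by exact_mod_cast hfact
  have heq' : (C₁ * x ^ 2 + C₂ : ℂ) = y ^ (2 * e + 1) := by exact_mod_cast heq
  have hN : δ * conj δ = ((C₁ * y : ℕ) : ℂ) := by
    refine mul_conj_eq_of_pow_eq (n := 2 * e + 1) (by omega) ?_
    rw [mul_pow, hδ, hδ']
    push_cast
    linear_combination (C₁ : ℂ) ^ (2 * e) * (C₁ * heq' - hfact' - d ^ 2 * sqrtneg_sq c)
  obtain ⟨T, hT⟩ := exists_intCast_eq_add_conj_of_mem_Kf hδK hδint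
  refine ⟨T, hT, by exact_mod_cast hN, ?_⟩
  have hV := lucasV.cast_eq_add_pow (R := ℂ) hT (by exact_mod_cast hN) (2 * e + 1)
  rw [hδ, hδ'] at hV
  have hV' :
      (lucasV T (C₁ * y) (2 * e + 1) : ℂ) = ((2 * ((C₁ : ℤ) ^ (e + 1) * x) : ℤ) : ℂ) := by
    push_cast at hV ⊢
    rw [hV]
    ring
  exact_mod_cast hV'

theorem isIntegral_div_sqrt_of_sq_eq {z γ : ℂ} {a : ℝ} (ha : 0 < a) (hγ : IsIntegral ℤ γ)
    (h : z ^ 2 = a * γ) : IsIntegral ℤ (z / Real.sqrt a) := by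
  refine IsIntegral.of_pow two_pos ?_
  have hsq : ((Real.sqrt a : ℝ) : ℂ) ^ 2 = a := by
    rw [← Complex.ofReal_pow, Real.sq_sqrt ha.le]
  have ha' : (a : ℂ) ≠ 0 := by exact_mod_cast ha.ne'
  rwa [div_pow, hsq, h, mul_div_cancel_left₀ _ ha']

theorem isIntegral_div_sqrt_of_add_of_mul {z w : ℂ} {a : ℕ} {s k : ℤ} (ha : 0 < a)
    (hz : IsIntegral ℤ z) (hsum : z + w = ((a * s : ℤ) : ℂ))
    (hprod : z * w = ((a * k : ℤ) : ℂ)) : IsIntegral ℤ (z / Real.sqrt a) := by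
  refine isIntegral_div_sqrt_of_sq_eq (by exact_mod_cast ha)
    ((isIntegral_algebraMap (x := s)).mul hz |>.sub (isIntegral_algebraMap (x := k))) ?_
  push_cast at hsum hprod ⊢
  linear_combination z * hsum - hprod

theorem ofReal_sqrt_natCast_sq (a : ℕ) : ((Real.sqrt a : ℝ) : ℂ) ^ 2 = a := by
  rw [← Complex.ofReal_pow, Real.sq_sqrt (Nat.cast_nonneg _), Complex.ofReal_natCast]

theorem sq_add_div_sqrt {z w : ℂ} {a : ℕ} {s : ℤ} (ha : 0 < a)
    (hsum : z + w = ((a * s : ℤ) : ℂ)) :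
    (z / Real.sqrt a + w / Real.sqrt a) ^ 2 = ((a * s ^ 2 : ℤ) : ℂ) := by
  have ha' : (a : ℂ) ≠ 0 := by exact_mod_cast ha.ne'
  rw [← add_div, hsum, div_pow, ofReal_sqrt_natCast_sq]
  push_cast
  field_simp

theorem div_sqrt_mul_div_sqrt {z w : ℂ} {a : ℕ} {k : ℤ} (ha : 0 < a)
    (hprod : z * w = ((a * k : ℤ) : ℂ)) : z / Real.sqrt a * (w / Real.sqrt a) = k := by
  have ha' : (a : ℂ) ≠ 0 := by exact_mod_cast ha.ne'
  rw [div_mul_div_comm, hprod, ← sq, ofReal_sqrt_natCast_sq]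
  push_cast
  field_simp

theorem isUnit_of_eq_mul_of_isIntegral {α β u : ℂ} {m k : ℤ} (hk : k ≠ 0)
    (hm : (α + β) ^ 2 = m) (hαβ : α * β = k) (hmk : IsCoprime m k)
    (hu : IsIntegral ℤ u) (hu' : IsIntegral ℤ u⁻¹) (h : α = u * β) : IsUnit k := by
  have hk' : (k : ℂ) ≠ 0 := by exact_mod_cast hk
  have hβ : β ≠ 0 := by rintro rfl; simp [eq_comm, hk'] at hαβ
  have hu0 : u ≠ 0 := by rintro rfl; simp [h, eq_comm, hk'] at hαβ
  have hsum : u + u⁻¹ = (((m - 2 * k) / k : ℚ) : ℂ) := by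
    push_cast
    rw [← hm, ← hαβ, h]
    field_simp
    ring
  obtain ⟨n, hn⟩ := exists_intCast_eq_of_isIntegral_ratCast (hsum ▸ hu.add hu')
  have hmn : m = (n + 2) * k := by
    have : (m : ℂ) = (n + 2) * k := by rw [hn]; push_cast; field_simp; ring
    exact_mod_cast this
  exact hmk.isUnit_of_dvd' ⟨n + 2, by rw [hmn]; ring⟩ dvd_rfl

theorem stmt9_general (C₁ C₂ c d : ℕ) (hC₁pos : 0 < C₁) (hC₁sqf : Squarefree C₁)
    (hC₂pos : 0 < C₂)
    (hfact : C₁ * C₂ = c * d ^ 2)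
    (p : ℕ) (hp : p.Prime) (hpodd : Odd p)
    (x y : ℕ) (hxpos : 0 < x) (hypos : 0 < y)
    (heq : C₁ * x ^ 2 + C₂ = y ^ p)
    (hgcd : Nat.gcd (Nat.gcd (C₁ * x ^ 2) C₂) (y ^ p) = 1)
    (δ : ℂ) (hδK : δ ∈ Kf c) (hδint : IsIntegral ℤ δ)
    (hδeq : (C₁ : ℂ) ^ ((p - 1) / 2) * ((C₁ : ℂ) * (x : ℂ) + (d : ℂ) * sqrtneg c) = δ ^ p)
    (α β : ℂ) (hα : α = δ / (Real.sqrt C₁ : ℂ))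
    (hβ : β = (starRingEnd ℂ) δ / (Real.sqrt C₁ : ℂ))
    :
    IsIntegral ℤ α ∧ IsIntegral ℤ β ∧
    (∃ m k : ℤ, m ≠ 0 ∧ k ≠ 0 ∧ (α + β) ^ 2 = (m : ℂ) ∧ α * β = (k : ℂ) ∧ IsCoprime m k) ∧
    ¬ ∃ u : ℂ, IsIntegral ℤ u ∧ IsIntegral ℤ u⁻¹ ∧ α = u * β := by
  obtain ⟨e, rfl⟩ := hpodd
  have he : 1 ≤ e := Nat.one_le_iff_ne_zero.mpr (by rintro rfl; exact Nat.not_prime_one hp)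
  rw [show (2 * e + 1 - 1) / 2 = e by omega] at hδeq
  obtain ⟨T, hT, hN, hV⟩ := exists_lucasV_eq_of_pow_eq hδK hδint hfact heq hδeq.symm
  obtain ⟨s, rfl⟩ : (C₁ : ℤ) ∣ T :=
    lucasV.dvd_of_squarefree (Int.squarefree_natCast.mpr hC₁sqf) (dvd_mul_right _ _)
      (Nat.succ_ne_zero _) (by rw [hV]; exact ⟨2 * (C₁ ^ e * x), by ring⟩)
  have hs : s ≠ 0 := right_ne_zero_of_mul (lucasV.ne_zero_of_odd (by rw [hV]; positivity))
  have hxy := isCoprime_mul_of_mul_sq_add_eq_pow (by omega) heq hgcd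
  have hcop := isCoprime_mul_sq_of_lucasV (by omega) hxy.of_mul_left_left
    (hxy.of_mul_left_left.pow_left.mul_left hxy.of_mul_left_right) hV
  have hsum := sq_add_div_sqrt hC₁pos hT
  have hprod := div_sqrt_mul_div_sqrt hC₁pos hN
  have hk : (y : ℤ) ≠ 0 := by positivity
  subst hα hβ
  refine ⟨isIntegral_div_sqrt_of_add_of_mul hC₁pos hδint hT hN,
    isIntegral_div_sqrt_of_add_of_mul hC₁pos (isIntegral_conj hδint)
      (by rw [add_comm, hT]) (by rw [mul_comm, hN]),
    ⟨_, _, by positivity, hk, hsum, hprod, hcop⟩, ?_⟩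
  rintro ⟨u, hu, hu', h⟩
  have hy : y = 1 := by
    have := Int.isUnit_iff.mp (isUnit_of_eq_mul_of_isIntegral hk hsum hprod hcop hu hu' h)
    omega
  have : 0 < C₁ * x ^ 2 := by positivity
  simp [hy] at heq
  omega

theorem stmt9 (C₁ C₂ c d : ℕ) (hC₁pos : 0 < C₁) (hC₁sqf : Squarefree C₁)
    (hC₂pos : 0 < C₂) (hcop : Nat.gcd C₁ C₂ = 1) (hmod8 : C₁ * C₂ % 8 ≠ 7)
    (hcpos : 0 < c) (hdpos : 0 < d) (hcsqf : Squarefree c)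
    (hfact : C₁ * C₂ = c * d ^ 2)
    (p : ℕ) (hp : p.Prime) (hpodd : Odd p)
    (hpcl : ¬ p ∣ classNumberK c)
    (hp3 : p = 3 → ¬ ∃ m : ℤ, (C₁ : ℤ) * (C₂ : ℤ) = 3 * m ^ 2)
    (x y : ℕ) (hxpos : 0 < x) (hypos : 0 < y)
    (heq : C₁ * x ^ 2 + C₂ = y ^ p)
    (hgcd : Nat.gcd (Nat.gcd (C₁ * x ^ 2) C₂) (y ^ p) = 1)
    (δ : ℂ) (hδK : δ ∈ Kf c) (hδint : IsIntegral ℤ δ)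
    (hδeq : (C₁ : ℂ) ^ ((p - 1) / 2) * ((C₁ : ℂ) * (x : ℂ) + (d : ℂ) * sqrtneg c) = δ ^ p)
    (α β : ℂ) (hα : α = δ / (Real.sqrt C₁ : ℂ))
    (hβ : β = (starRingEnd ℂ) δ / (Real.sqrt C₁ : ℂ))
    :
    IsIntegral ℤ α ∧ IsIntegral ℤ β ∧
    (∃ m k : ℤ, m ≠ 0 ∧ k ≠ 0 ∧ (α + β) ^ 2 = (m : ℂ) ∧ α * β = (k : ℂ) ∧ IsCoprime m k) ∧
    ¬ ∃ u : ℂ, IsIntegral ℤ u ∧ IsIntegral ℤ u⁻¹ ∧ α = u * β :=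
  stmt9_general C₁ C₂ c d hC₁pos hC₁sqf hC₂pos hfact p hp hpodd x y hxpos hypos heq hgcd δ hδK hδint
    hδeq α β hα hβ
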